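/- One-sided directional derivative of MLU: for any path p, the right directional derivative of M(R) = max_e f_e(R)/c(e) in the coordinate direction of r_p equals max over edges e achieving the maximum (f_e(R)/c(e) = M(R)) and contained in p of D_p/c(e), or 0 if no maximizing edge lies on p, provided D_p ≥ 0. -/

import Mathlib

/-!
Along the ray `R + t δ_p` each edge load is affine in `t`: `f_e / c_e` moves with slope
`D_p / c_e` if `e ∈ p` and `0` otherwise, so `M` is a maximum of finitely many affine functions.
For small `t ≥ 0` such a maximum is attained among the functions that are maximal at `t = 0`,
and among those by one of largest slope; hence its right derivative at `0` is the largest slope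
of an active function. Since `D_p ≥ 0`, active edges off `p` (slope `0`) do not change that
maximum unless no active edge lies on `p`.
-/

open Finset Filter Topology

namespace Finset

variable {ι : Type*} {s : Finset ι} (hs : s.Nonempty) (a b : ι → ℝ)

open scoped Classical in
noncomputable def maximizers : Finset ι := s.filter fun i => a i = s.sup' hs a

theorem mem_maximizers {i : ι} : i ∈ maximizers hs a ↔ i ∈ s ∧ a i = s.sup' hs a := by
  simp only [maximizers, mem_filter]

theorem maximizers_nonempty : (maximizers hs a).Nonempty := by
  obtain ⟨i, hi, hmax⟩ := exists_mem_eq_sup' hs a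
  exact ⟨i, (mem_maximizers hs a).2 ⟨hi, hmax.symm⟩⟩

theorem eventually_sup'_add_mul_eq :
    ∀ᶠ t in 𝓝[≥] (0 : ℝ), s.sup' hs (fun i => a i + b i * t) =
      s.sup' hs a + (maximizers hs a).sup' (maximizers_nonempty hs a) b * t := by
  set β := (maximizers hs a).sup' (maximizers_nonempty hs a) b with hβdef
  have below : ∀ i ∈ s, ∀ᶠ t in 𝓝[≥] (0 : ℝ), a i + b i * t ≤ s.sup' hs a + β * t := by
    intro i hi
    by_cases hai : a i = s.sup' hs a
    · filter_upwards [self_mem_nhdsWithin] with t (ht : 0 ≤ t)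
      have hb : b i ≤ β := le_sup' b ((mem_maximizers hs a).2 ⟨hi, hai⟩)
      rw [hai]
      gcongr
    · have hlt : a i < s.sup' hs a := lt_of_le_of_ne (le_sup' a hi) hai
      have : ∀ᶠ t in 𝓝 (0 : ℝ), a i + b i * t < s.sup' hs a + β * t :=
        ContinuousAt.eventually_lt (by fun_prop) (by fun_prop) (by simpa using hlt)
      exact (this.filter_mono nhdsWithin_le_nhds).mono fun _ h => h.le
  filter_upwards [(eventually_all_finset s).2 below] with t ht
  refine le_antisymm (sup'_le _ _ ht) ?_
  obtain ⟨j, hj, hβ⟩ := exists_mem_eq_sup' (maximizers_nonempty hs a) b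
  obtain ⟨hjs, hja⟩ := (mem_maximizers hs a).1 hj
  calc s.sup' hs a + β * t = a j + b j * t := by rw [hβdef, hβ, hja]
    _ ≤ _ := le_sup' (fun i => a i + b i * t) hjs

theorem hasDerivWithinAt_sup'_add_mul :
    HasDerivWithinAt (fun t => s.sup' hs (fun i => a i + b i * t))
      ((maximizers hs a).sup' (maximizers_nonempty hs a) b) (Set.Ici 0) 0 := by
  set β := (maximizers hs a).sup' (maximizers_nonempty hs a) b
  have hline : HasDerivWithinAt (fun t => s.sup' hs a + β * t) β (Set.Ici 0) 0 := by
    simpa using (((hasDerivAt_id (0 : ℝ)).const_mul β).const_add (s.sup' hs a)).hasDerivWithinAt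
  exact hline.congr_of_eventuallyEq (eventually_sup'_add_mul_eq hs a b) (by simp)

theorem sup'_ite_zero {P : ι → Prop} [DecidablePred P] {g : ι → ℝ}
    (hg : ∀ i ∈ s, P i → 0 ≤ g i) :
    s.sup' hs (fun i => if P i then g i else 0) =
      if h : (s.filter P).Nonempty then (s.filter P).sup' h g else 0 := by
  split_ifs with h
  · refine le_antisymm (sup'_le _ _ fun i hi => ?_) (sup'_le _ _ fun i hi => ?_)
    · split_ifs with hPi
      · exact le_sup' g (mem_filter.2 ⟨hi, hPi⟩)
      · obtain ⟨j, hj⟩ := h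
        exact (hg j (mem_filter.1 hj).1 (mem_filter.1 hj).2).trans (le_sup' g hj)
    · obtain ⟨his, hPi⟩ := mem_filter.1 hi
      simpa only [hPi, if_true] using le_sup' (fun i => if P i then g i else 0) his
  · have hP : ∀ i ∈ s, ¬ P i := fun i hi hPi => h ⟨i, mem_filter.2 ⟨hi, hPi⟩⟩
    rw [sup'_congr hs rfl fun i hi => if_neg (hP i hi), sup'_const]

end Finset

open scoped Classical in
theorem stmt10 {E Φ : Type*} [Fintype E] [Nonempty E] [Fintype Φ] [DecidableEq E]
    [DecidableEq Φ]
    (c : E → ℝ) (hc : ∀ e, 0 < c e) (edges : Φ → Finset E)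
    (D : Φ → ℝ) (hD : ∀ q, 0 ≤ D q)
    (R : Φ → ℝ) (p : Φ) :
    let f : E → (Φ → ℝ) → ℝ := fun e R' =>
      ∑ q ∈ univ.filter (fun q => e ∈ edges q), D q * R' q
    let M : (Φ → ℝ) → ℝ := fun R' =>
      univ.sup' univ_nonempty (fun e => f e R' / c e)
    let A : Finset E := univ.filter (fun e => f e R / c e = M R ∧ e ∈ edges p)
    let d : ℝ := if h : A.Nonempty then A.sup' h (fun e => D p / c e) else 0
    HasDerivWithinAt (fun t : ℝ => M (fun q => R q + (if q = p then t else 0)))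
      d (Set.Ici 0) 0 := by
  intro f M A d
  let b : E → ℝ := fun e => if e ∈ edges p then D p / c e else 0
  have hshift : ∀ t : ℝ, M (fun q => R q + if q = p then t else 0) =
      univ.sup' univ_nonempty (fun e => f e R / c e + b e * t) := fun t =>
    sup'_congr _ rfl fun e _ => by
      simp only [f, b, mul_add, sum_add_distrib, mul_ite, mul_zero, sum_ite_eq', mem_filter,
        mem_univ, true_and, add_div, ite_mul, zero_mul]
      split_ifs <;> ring
  have hT := maximizers_nonempty univ_nonempty fun e => f e R / c e
  have hslope : (maximizers univ_nonempty fun e => f e R / c e).sup' hT b = d := by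
    rw [sup'_ite_zero hT fun e _ _ => div_nonneg (hD p) (hc e).le]
    simp only [maximizers, filter_filter, d, A]
    congr
  rw [← hslope, funext hshift]
  exact hasDerivWithinAt_sup'_add_mul univ_nonempty (fun e => f e R / c e) b
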